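/- arXiv:1109.1075 — 2 statements merged into one kernel-verified Lean document; each statement's English description precedes it below -/
import Mathlib

section
/- Let β, γ, μ > 0, let x₀ ∈ ℝ, and let O := (x₀,∞) × (0,∞). There exists a constant C > 0, depending only on γ, such that for every u ∈ C¹(ℝ²) with compact support: ∫₀^∞ u(x₀,y)² y^β e^{−γ|x₀| − μy} dy ≤ C ∫_O ( y|Du|² + (1+y)u² ) 𝔴 dx dy, where |Du|² = u_x² + u_y². -/
/-!
For each height `y`, applying the fundamental theorem of calculus to `u² e^{-γ (x - x₀)}` on
`(x₀, ∞)` and using `-2 u u_x ≤ u_x² + u²` gives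
`u(x₀,y)² e^{-γ|x₀|} ≤ ∫_{x₀}^∞ (u_x² + (1+γ) u²) e^{-γ|x|} dx`, because
`e^{-γ|x₀| - γ(x - x₀)} ≤ e^{-γ|x|}` for `x ≥ x₀`. Multiplying by
`y^β e^{-μy} = y · y^{β-1} e^{-μy}` and integrating in `y` (Fubini) yields the estimate with
`C = 1 + γ`, since `y (u_x² + (1+γ) u²) ≤ (1+γ) (y |Du|² + (1+y) u²)`. The right-hand side is
finite because `β > 0` makes `y^{β-1}` integrable near `y = 0`.
-/

open MeasureTheory Real Filter

noncomputable section

/-- The open upper half-plane ℍ ⊂ ℝ². -/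
def UHP : Set (ℝ × ℝ) := {p : ℝ × ℝ | 0 < p.2}

/-- Partial derivative in the first (x) variable. -/
def pdX (u : ℝ × ℝ → ℝ) (p : ℝ × ℝ) : ℝ := fderiv ℝ u p (1, 0)

/-- Partial derivative in the second (y) variable. -/
def pdY (u : ℝ × ℝ → ℝ) (p : ℝ × ℝ) : ℝ := fderiv ℝ u p (0, 1)

/-- The weight 𝔴(x,y) = y^(β−1) exp(−γ|x| − μ y). -/
def hw (β γ μ : ℝ) (p : ℝ × ℝ) : ℝ :=
  p.2 ^ (β - 1) * Real.exp (-γ * |p.1| - μ * p.2)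

open Set

section OneDimensional

variable {f : ℝ → ℝ}

theorem deriv_eq_zero_of_notMem_tsupport {x : ℝ} (hx : x ∉ tsupport f) : deriv f x = 0 :=
  image_eq_zero_of_notMem_tsupport fun h => hx (tsupport_deriv_subset h)

theorem integrable_energy_mul (hf : ContDiff ℝ 1 f) (hcs : HasCompactSupport f)
    {w : ℝ → ℝ} (hwc : Continuous w) (c : ℝ) :
    Integrable fun x => (deriv f x ^ 2 + c * f x ^ 2) * w x := by
  refine Continuous.integrable_of_hasCompactSupport ?_ ?_
  · have := hf.continuous_deriv le_rfl
    fun_prop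
  · refine HasCompactSupport.intro' hcs (isClosed_tsupport _) fun x hx => ?_
    simp [image_eq_zero_of_notMem_tsupport hx, deriv_eq_zero_of_notMem_tsupport hx]

theorem sq_le_integral_Ioi_mul_exp (hf : ContDiff ℝ 1 f) (hcs : HasCompactSupport f)
    (γ x₀ : ℝ) :
    f x₀ ^ 2 ≤ ∫ x in Ioi x₀, (deriv f x ^ 2 + (1 + γ) * f x ^ 2) * exp (-γ * (x - x₀)) := by
  set e : ℝ → ℝ := fun x => exp (-γ * (x - x₀))
  set F' : ℝ → ℝ := fun x => (2 * f x * deriv f x - γ * f x ^ 2) * e x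
  have he : Continuous e := by fun_prop
  have hF : ∀ x, HasDerivAt (fun x => f x ^ 2 * e x) (F' x) x := by
    intro x
    have hfx := (hf.differentiable one_ne_zero x).hasDerivAt
    have hex : HasDerivAt e (-γ * e x) x := by
      simpa [e, mul_comm] using (((hasDerivAt_id x).sub_const x₀).const_mul (-γ)).exp
    refine ((hfx.pow 2).mul hex).congr_deriv ?_
    simp only [F', Pi.pow_apply]
    push_cast
    ring
  have hF'int : Integrable F' := by
    refine Continuous.integrable_of_hasCompactSupport ?_ ?_
    · have := hf.continuous_deriv le_rfl
      have := hf.continuous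
      fun_prop
    · refine HasCompactSupport.intro' hcs (isClosed_tsupport _) fun x hx => ?_
      simp [F', image_eq_zero_of_notMem_tsupport hx]
  have hlim : Tendsto (fun x => f x ^ 2 * e x) atTop (nhds 0) := by
    have hcsF : HasCompactSupport fun x => f x ^ 2 * e x :=
      HasCompactSupport.intro' hcs (isClosed_tsupport _) fun x hx => by
        simp [image_eq_zero_of_notMem_tsupport hx]
    exact hcsF.is_zero_at_infty.mono_left atTop_le_cocompact
  have hFTC : ∫ x in Ioi x₀, F' x = 0 - f x₀ ^ 2 * e x₀ :=
    integral_Ioi_of_hasDerivAt_of_tendsto' (fun x _ => hF x) hF'int.integrableOn hlim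
  calc f x₀ ^ 2 = ∫ x in Ioi x₀, -F' x := by simp [integral_neg, hFTC, e]
    _ ≤ _ := by
      refine setIntegral_mono hF'int.neg.integrableOn
        (integrable_energy_mul hf hcs he _).integrableOn fun x => ?_
      have : -(2 * f x * deriv f x - γ * f x ^ 2) ≤ deriv f x ^ 2 + (1 + γ) * f x ^ 2 := by
        nlinarith [sq_nonneg (f x + deriv f x)]
      rw [← neg_mul]
      exact mul_le_mul_of_nonneg_right this (exp_pos _).le

theorem sq_mul_exp_abs_le_integral_Ioi (hf : ContDiff ℝ 1 f) (hcs : HasCompactSupport f)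
    {γ : ℝ} (hγ : 0 ≤ γ) (x₀ : ℝ) :
    f x₀ ^ 2 * exp (-γ * |x₀|) ≤
      ∫ x in Ioi x₀, (deriv f x ^ 2 + (1 + γ) * f x ^ 2) * exp (-γ * |x|) := by
  have hweight : ∀ x ∈ Ioi x₀, exp (-γ * |x₀|) * exp (-γ * (x - x₀)) ≤ exp (-γ * |x|) := by
    intro x hx
    rw [← exp_add, exp_le_exp]
    have : |x| ≤ |x₀| + (x - x₀) := by
      have := abs_sub_abs_le_abs_sub x x₀
      rw [abs_of_pos (sub_pos.2 hx)] at this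
      linarith
    nlinarith
  calc f x₀ ^ 2 * exp (-γ * |x₀|)
      ≤ exp (-γ * |x₀|) *
          ∫ x in Ioi x₀, (deriv f x ^ 2 + (1 + γ) * f x ^ 2) * exp (-γ * (x - x₀)) := by
        rw [mul_comm]
        exact mul_le_mul_of_nonneg_left (sq_le_integral_Ioi_mul_exp hf hcs γ x₀) (exp_pos _).le
    _ = ∫ x in Ioi x₀, (deriv f x ^ 2 + (1 + γ) * f x ^ 2) *
          (exp (-γ * |x₀|) * exp (-γ * (x - x₀))) := by
        rw [← integral_const_mul]
        congr 1 with x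
        ring
    _ ≤ _ := by
      refine setIntegral_mono_on (integrable_energy_mul hf hcs (by fun_prop) _).integrableOn
        (integrable_energy_mul hf hcs (by fun_prop) _).integrableOn measurableSet_Ioi
        fun x hx => mul_le_mul_of_nonneg_left (hweight x hx) ?_
      positivity

end OneDimensional

section Plane

variable {u : ℝ × ℝ → ℝ}

theorem pdX_eq_zero_of_notMem_tsupport {p : ℝ × ℝ} (hp : p ∉ tsupport u) : pdX u p = 0 := by
  simp [pdX, Function.notMem_support.mp fun h => hp (support_fderiv_subset ℝ h)]

theorem pdY_eq_zero_of_notMem_tsupport {p : ℝ × ℝ} (hp : p ∉ tsupport u) : pdY u p = 0 := by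
  simp [pdY, Function.notMem_support.mp fun h => hp (support_fderiv_subset ℝ h)]

theorem continuous_pdX (hu : ContDiff ℝ 1 u) : Continuous (pdX u) :=
  (hu.continuous_fderiv one_ne_zero).clm_apply continuous_const

theorem continuous_pdY (hu : ContDiff ℝ 1 u) : Continuous (pdY u) :=
  (hu.continuous_fderiv one_ne_zero).clm_apply continuous_const

theorem hasDerivAt_slice (hu : Differentiable ℝ u) (x y : ℝ) :
    HasDerivAt (fun x => u (x, y)) (pdX u (x, y)) x :=
  (hu (x, y)).hasFDerivAt.comp_hasDerivAt x ((hasDerivAt_id x).prodMk (hasDerivAt_const x y))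

theorem HasCompactSupport.slice (hcs : HasCompactSupport u) (y : ℝ) :
    HasCompactSupport fun x => u (x, y) :=
  HasCompactSupport.intro' (hcs.image continuous_fst) (hcs.image continuous_fst).isClosed
    fun x hx => image_eq_zero_of_notMem_tsupport fun h => hx ⟨(x, y), h, rfl⟩

theorem sq_mul_exp_abs_le_integral_pdX (hu : ContDiff ℝ 1 u) (hcs : HasCompactSupport u)
    {γ : ℝ} (hγ : 0 ≤ γ) (x₀ y : ℝ) :
    u (x₀, y) ^ 2 * exp (-γ * |x₀|) ≤
      ∫ x in Ioi x₀, (pdX u (x, y) ^ 2 + (1 + γ) * u (x, y) ^ 2) * exp (-γ * |x|) := by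
  have hslice : ContDiff ℝ 1 fun x => u (x, y) := hu.comp (contDiff_id.prodMk contDiff_const)
  simpa only [(hasDerivAt_slice (hu.differentiable one_ne_zero) _ y).deriv] using
    sq_mul_exp_abs_le_integral_Ioi hslice (hcs.slice y) hγ x₀

theorem measurableSet_UHP : MeasurableSet UHP :=
  measurableSet_lt measurable_const measurable_snd

theorem Continuous.integrableOn_UHP_mul_snd {G : ℝ × ℝ → ℝ} (hG : Continuous G)
    (hcs : HasCompactSupport G) {w : ℝ → ℝ} (hwint : ∀ R, IntegrableOn w (Ioc 0 R)) :
    IntegrableOn (fun p => G p * w p.2) UHP := by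
  obtain ⟨R, hR⟩ := hcs.isCompact.isBounded.subset_closedBall (0 : ℝ × ℝ)
  obtain ⟨M, hM⟩ := hG.bounded_above_of_compact_support hcs
  have hbox : IntegrableOn (fun p => G p * w p.2) (Icc (-R) R ×ˢ Ioc 0 R) := by
    have hwbox : Integrable (fun p : ℝ × ℝ => w p.2)
        ((volume.restrict (Icc (-R) R)).prod (volume.restrict (Ioc 0 R))) :=
      (hwint R).comp_snd _
    rw [Measure.prod_restrict, ← Measure.volume_eq_prod] at hwbox
    exact hwbox.bdd_mul hG.aestronglyMeasurable (Eventually.of_forall hM)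
  refine hbox.of_forall_sdiff_eq_zero measurableSet_UHP fun p ⟨hp, hpbox⟩ => ?_
  suffices p ∉ tsupport G by simp [image_eq_zero_of_notMem_tsupport this]
  intro hpG
  have hnorm : ‖p‖ ≤ R := by simpa using hR hpG
  refine hpbox ⟨abs_le.1 ((norm_fst_le p).trans hnorm), hp, ?_⟩
  exact (le_abs_self _).trans ((norm_snd_le p).trans hnorm)

theorem integrableOn_energy_mul_hw (hu : ContDiff ℝ 1 u) (hcs : HasCompactSupport u)
    {β : ℝ} (hβ : 0 < β) (γ μ : ℝ) :
    IntegrableOn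
      (fun p => (p.2 * (pdX u p ^ 2 + pdY u p ^ 2) + (1 + p.2) * u p ^ 2) * hw β γ μ p) UHP := by
  have hcu := hu.continuous
  have hX := continuous_pdX hu
  have hY := continuous_pdY hu
  set H : ℝ × ℝ → ℝ := fun p =>
    (p.2 * (pdX u p ^ 2 + pdY u p ^ 2) + (1 + p.2) * u p ^ 2) * exp (-γ * |p.1| - μ * p.2)
  have hH : Continuous H := by fun_prop
  have hcsH : HasCompactSupport H :=
    HasCompactSupport.intro' hcs (isClosed_tsupport _) fun p hp => by
      simp [H, image_eq_zero_of_notMem_tsupport hp, pdX_eq_zero_of_notMem_tsupport hp,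
        pdY_eq_zero_of_notMem_tsupport hp]
  refine (hH.integrableOn_UHP_mul_snd hcsH (w := fun y => y ^ (β - 1)) fun R =>
    (intervalIntegral.intervalIntegrable_rpow' (by linarith)).1).congr_fun
      (fun p _ => by simp only [H, hw]; ring) measurableSet_UHP

theorem integrable_pdX_energy_mul (hu : ContDiff ℝ 1 u) (hcs : HasCompactSupport u)
    {β : ℝ} (hβ : 0 ≤ β) (γ μ : ℝ) :
    Integrable fun p : ℝ × ℝ =>
      (pdX u p ^ 2 + (1 + γ) * u p ^ 2) * exp (-γ * |p.1|) * (p.2 ^ β * exp (-μ * p.2)) := by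
  have hcu := hu.continuous
  have hX := continuous_pdX hu
  have hpow : Continuous fun p : ℝ × ℝ => p.2 ^ β := (continuous_rpow_const hβ).comp continuous_snd
  refine Continuous.integrable_of_hasCompactSupport (by fun_prop)
    (HasCompactSupport.intro' hcs (isClosed_tsupport _) fun p hp => ?_)
  simp [image_eq_zero_of_notMem_tsupport hp, pdX_eq_zero_of_notMem_tsupport hp]

end Plane

section Fubini

variable {α β E : Type*} [MeasureSpace α] [MeasureSpace β] [SFinite (volume : Measure α)]
  [SFinite (volume : Measure β)] [NormedAddCommGroup E] [NormedSpace ℝ E]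
  {f : α × β → E} {s : Set α} {t : Set β}

theorem IntegrableOn.integrableOn_setIntegral_fst (hf : IntegrableOn f (s ×ˢ t)) :
    IntegrableOn (fun y => ∫ x in s, f (x, y)) t := by
  rw [IntegrableOn, Measure.volume_eq_prod, ← Measure.prod_restrict] at hf
  exact hf.integral_prod_right

theorem setIntegral_prod_eq_integral_integral_swap (hf : IntegrableOn f (s ×ˢ t)) :
    ∫ p in s ×ˢ t, f p = ∫ y in t, ∫ x in s, f (x, y) := by
  rw [IntegrableOn, Measure.volume_eq_prod, ← Measure.prod_restrict] at hf
  rw [Measure.volume_eq_prod, ← Measure.prod_restrict, integral_prod f hf]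
  exact integral_integral_swap hf

end Fubini

theorem exp_neg_mul_sub_mul (a b x y : ℝ) :
    exp (-a * x - b * y) = exp (-a * x) * exp (-b * y) := by
  rw [← exp_add]
  ring_nf

theorem mul_rpow_mul_exp_le_mul_hw {a b c β γ μ : ℝ} (hγ : 0 ≤ γ) {p : ℝ × ℝ} (hp : 0 < p.2) :
    (a ^ 2 + (1 + γ) * c ^ 2) * exp (-γ * |p.1|) * (p.2 ^ β * exp (-μ * p.2)) ≤
      (1 + γ) * ((p.2 * (a ^ 2 + b ^ 2) + (1 + p.2) * c ^ 2) * hw β γ μ p) := by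
  obtain ⟨x, y⟩ := p
  dsimp only at hp ⊢
  have hrpow : y ^ β = y * y ^ (β - 1) := by
    rw [rpow_sub_one hp.ne', mul_div_cancel₀ _ hp.ne']
  have key : (a ^ 2 + (1 + γ) * c ^ 2) * y ≤ (1 + γ) * (y * (a ^ 2 + b ^ 2) + (1 + y) * c ^ 2) := by
    nlinarith [mul_nonneg (mul_nonneg hγ hp.le) (sq_nonneg a), mul_nonneg hp.le (sq_nonneg b),
      mul_nonneg hγ (mul_nonneg hp.le (sq_nonneg b)), mul_nonneg hγ (sq_nonneg c), sq_nonneg c]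
  calc _ = (a ^ 2 + (1 + γ) * c ^ 2) * y * (y ^ (β - 1) * exp (-γ * |x|) * exp (-μ * y)) := by
        rw [hrpow]; ring
    _ ≤ (1 + γ) * (y * (a ^ 2 + b ^ 2) + (1 + y) * c ^ 2) *
          (y ^ (β - 1) * exp (-γ * |x|) * exp (-μ * y)) :=
        mul_le_mul_of_nonneg_right key (by positivity)
    _ = _ := by simp only [hw, exp_neg_mul_sub_mul]; ring

/-- Γ₁-boundary trace estimate on the quadrant O = (x₀,∞) × (0,∞);
the constant C depends only on γ. -/
theorem stmt11 :
    ∀ γ : ℝ, 0 < γ → ∃ C : ℝ, 0 < C ∧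
      ∀ β μ : ℝ, 0 < β → 0 < μ → ∀ x₀ : ℝ,
        ∀ u : ℝ × ℝ → ℝ, ContDiff ℝ 1 u → HasCompactSupport u →
          (∫ y in Set.Ioi (0 : ℝ),
              (u (x₀, y)) ^ 2 * y ^ β * Real.exp (-γ * |x₀| - μ * y))
            ≤ C * ∫ p in Set.Ioi x₀ ×ˢ Set.Ioi (0 : ℝ),
                (p.2 * ((pdX u p) ^ 2 + (pdY u p) ^ 2) + (1 + p.2) * (u p) ^ 2)
                  * hw β γ μ p := by
  intro γ hγ
  refine ⟨1 + γ, by linarith, fun β μ hβ _ x₀ u hu hcs => ?_⟩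
  set G : ℝ × ℝ → ℝ := fun p =>
    (pdX u p ^ 2 + (1 + γ) * u p ^ 2) * exp (-γ * |p.1|) * (p.2 ^ β * exp (-μ * p.2))
  have hG : IntegrableOn G (Ioi x₀ ×ˢ Ioi 0) :=
    (integrable_pdX_energy_mul hu hcs hβ.le γ μ).integrableOn
  have htrace : ∀ y ∈ Ioi (0 : ℝ),
      u (x₀, y) ^ 2 * y ^ β * exp (-γ * |x₀| - μ * y) ≤ ∫ x in Ioi x₀, G (x, y) := by
    intro y (hy : 0 < y)
    calc _ = u (x₀, y) ^ 2 * exp (-γ * |x₀|) * (y ^ β * exp (-μ * y)) := by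
          rw [exp_neg_mul_sub_mul]; ring
      _ ≤ _ := mul_le_mul_of_nonneg_right
          (sq_mul_exp_abs_le_integral_pdX hu hcs hγ.le x₀ y) (by positivity)
      _ = _ := (integral_mul_const _ _).symm
  calc _ ≤ ∫ y in Ioi 0, ∫ x in Ioi x₀, G (x, y) := by
        refine integral_mono_of_nonneg ?_ (IntegrableOn.integrableOn_setIntegral_fst hG)
          ((ae_restrict_mem measurableSet_Ioi).mono htrace)
        filter_upwards [ae_restrict_mem measurableSet_Ioi] with y (hy : 0 < y)
        positivity
    _ = ∫ p in Ioi x₀ ×ˢ Ioi 0, G p := (setIntegral_prod_eq_integral_integral_swap hG).symm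
    _ ≤ ∫ p in Ioi x₀ ×ˢ Ioi 0,
          (1 + γ) * ((p.2 * (pdX u p ^ 2 + pdY u p ^ 2) + (1 + p.2) * u p ^ 2) * hw β γ μ p) :=
        setIntegral_mono_on hG
          (((integrableOn_energy_mul_hw hu hcs hβ γ μ).mono_set fun p hp => hp.2).const_mul _)
          (measurableSet_Ioi.prod measurableSet_Ioi)
          fun p hp => mul_rpow_mul_exp_le_mul_hw hγ.le hp.2
    _ = _ := integral_const_mul _ _
end
end

section
/- Let 0 < β < 1 and γ, μ > 0, let x₀ ∈ ℝ, and let O := (x₀,∞) × (0,∞). There exists a constant C > 0, depending only on μ, such that for every u ∈ C¹(ℝ²) with compact support: ∫_{x₀}^∞ u(x,0)² e^{−γ|x|} dx ≤ C ∫_O ( |Du|² + u² ) 𝔴 dx dy, where |Du|² = u_x² + u_y². -/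
/-!
Fix `x` and put `v y = u (x, y)`. The fundamental theorem of calculus applied to the compactly
supported function `v² e^{-a y}` gives `v(0)² = ∫₀^∞ (a v² - 2 v v') e^{-a y} dy`. With
`a = μ + 1`, `-2 v v' ≤ v² + v'²` and `e^{-y} ≤ y^{β-1}` (valid for `0 ≤ β ≤ 1`) this yields
`u(x,0)² ≤ (μ + 2) ∫₀^∞ (|Du|² + u²)(x,y) y^{β-1} e^{-μ y} dy`.
Multiplying by `e^{-γ|x|}` and integrating over `x > x₀` (Fubini) gives the estimate with
`C = μ + 2`.
-/

open MeasureTheory Real Filter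

noncomputable section

open Set

lemma exp_neg_le_rpow_sub_one {β y : ℝ} (hβ0 : 0 ≤ β) (hβ1 : β ≤ 1) (hy : 0 < y) :
    exp (-y) ≤ y ^ (β - 1) := by
  rcases le_or_gt y 1 with hy1 | hy1
  · calc exp (-y) ≤ 1 := exp_le_one_iff.mpr (by linarith)
      _ ≤ y ^ (β - 1) := one_le_rpow_of_pos_of_le_one_of_nonpos hy hy1 (by linarith)
  · calc exp (-y) ≤ y⁻¹ := by
          rw [exp_neg]; exact inv_anti₀ hy (by linarith [add_one_le_exp y])
      _ = y ^ (-1 : ℝ) := (rpow_neg_one y).symm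
      _ ≤ y ^ (β - 1) := rpow_le_rpow_of_exponent_le hy1.le (by linarith)

lemma integrable_exp_neg_mul_abs {γ : ℝ} (hγ : 0 < γ) :
    Integrable fun x : ℝ => exp (-γ * |x|) := by
  rw [← integrableOn_univ, ← Iic_union_Ioi (a := 0)]
  refine IntegrableOn.union ?_ ?_
  · refine (integrableOn_exp_mul_Iic hγ 0).congr_fun (fun x (hx : x ≤ 0) => ?_)
      measurableSet_Iic
    simp only [abs_of_nonpos hx, neg_mul, mul_neg, neg_neg]
  · refine (exp_neg_integrableOn_Ioi 0 hγ).congr_fun (fun x hx => ?_) measurableSet_Ioi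
    rw [abs_of_pos hx]

lemma integrableOn_rpow_sub_one_mul_exp_neg {β μ : ℝ} (hβ : 0 < β) (hμ : 0 < μ) :
    IntegrableOn (fun y : ℝ => y ^ (β - 1) * exp (-μ * y)) (Ioi 0) := by
  simpa using integrableOn_rpow_mul_exp_neg_mul_rpow (by linarith : -1 < β - 1) one_pos hμ

lemma hw_mk (β γ μ x y : ℝ) :
    hw β γ μ (x, y) = exp (-γ * |x|) * (y ^ (β - 1) * exp (-μ * y)) := by
  simp only [hw, sub_eq_add_neg (-γ * |x|), exp_add, neg_mul μ]
  ring

lemma UHP_eq_univ_prod : UHP = univ ×ˢ Ioi 0 := by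
  ext p; simp [UHP]

lemma integrableOn_hw_UHP {β γ μ : ℝ} (hβ : 0 < β) (hγ : 0 < γ) (hμ : 0 < μ) :
    IntegrableOn (hw β γ μ) UHP := by
  rw [UHP_eq_univ_prod, IntegrableOn, Measure.volume_eq_prod, ← Measure.prod_restrict,
    Measure.restrict_univ]
  refine ((integrable_exp_neg_mul_abs hγ).mul_prod
    (integrableOn_rpow_sub_one_mul_exp_neg hβ hμ)).congr (ae_of_all _ fun p => ?_)
  exact (hw_mk β γ μ p.1 p.2).symm

lemma HasCompactSupport.comp_prodMkLeft {X Y : Type*} [TopologicalSpace X]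
    [TopologicalSpace Y] [T1Space Y] {f : X × Y → ℝ} (hf : HasCompactSupport f) (y : Y) :
    HasCompactSupport fun x => f (x, y) :=
  hf.comp_isClosedEmbedding
    ⟨isEmbedding_prodMkLeft y, (isClosedMap_prodMk_right y).isClosed_range⟩

lemma HasCompactSupport.comp_prodMkRight {X Y : Type*} [TopologicalSpace X]
    [TopologicalSpace Y] [T1Space X] {f : X × Y → ℝ} (hf : HasCompactSupport f) (x : X) :
    HasCompactSupport fun y => f (x, y) :=
  hf.comp_isClosedEmbedding
    ⟨isEmbedding_prodMkRight x, (isClosedMap_prodMk_left x).isClosed_range⟩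

lemma HasCompactSupport.integrable_mul {X : Type*} [TopologicalSpace X] [MeasurableSpace X]
    [OpensMeasurableSpace X] {μ : Measure X} {f g : X → ℝ} (hf : HasCompactSupport f)
    (hfc : Continuous f) (hg : Integrable g μ) : Integrable (fun x => f x * g x) μ := by
  obtain ⟨C, hC⟩ := hf.exists_bound_of_continuous hfc
  exact hg.bdd_mul hfc.aestronglyMeasurable (ae_of_all _ hC)

lemma sq_apply_zero_le_integral_Ioi {v : ℝ → ℝ} (hv : ContDiff ℝ 1 v)
    (hcs : HasCompactSupport v) (a : ℝ) :
    v 0 ^ 2 ≤ ∫ y in Ioi 0, ((a + 1) * v y ^ 2 + deriv v y ^ 2) * exp (-(a * y)) := by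
  set R : ℝ → ℝ := fun y => ((a + 1) * v y ^ 2 + deriv v y ^ 2) * exp (-(a * y))
  set F : ℝ → ℝ := fun y => v y ^ 2 * exp (-(a * y))
  have hF : ContDiff ℝ 1 F := (hv.pow 2).mul (contDiff_const.mul contDiff_id).neg.exp
  have hFcs : HasCompactSupport F :=
    (hcs.comp_left (g := (· ^ 2)) (zero_pow two_ne_zero)).mul_right
  have hF' (y : ℝ) : deriv F y = (2 * v y * deriv v y - a * v y ^ 2) * exp (-(a * y)) := by
    have hvy := (hv.differentiable one_ne_zero y).hasDerivAt
    have hexp : HasDerivAt (fun y => exp (-(a * y))) (exp (-(a * y)) * -a) y :=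
      (((hasDerivAt_id y).const_mul a).neg.exp).congr_deriv (by simp)
    rw [((hvy.fun_pow 2).fun_mul hexp).deriv]
    ring
  have hFint : IntegrableOn (deriv F) (Ioi 0) :=
    ((hF.continuous_deriv le_rfl).integrable_of_hasCompactSupport hFcs.deriv).integrableOn
  have hFTC : ∫ y in Ioi 0, deriv F y = 0 - F 0 :=
    integral_Ioi_of_hasDerivAt_of_tendsto'
      (fun y _ => (hF.differentiable one_ne_zero y).hasDerivAt) hFint
      (hFcs.is_zero_at_infty.mono_left atTop_le_cocompact)
  have hRcs : HasCompactSupport R := by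
    refine hcs.mono' fun y hy => by_contra fun hy' => hy ?_
    have hdv : deriv v y = 0 :=
      Function.notMem_support.mp fun h => hy' (support_deriv_subset h)
    simp [R, image_eq_zero_of_notMem_tsupport hy', hdv]
  have hRint : IntegrableOn R (Ioi 0) :=
    (Continuous.integrable_of_hasCompactSupport (by fun_prop) hRcs).integrableOn
  calc v 0 ^ 2 = ∫ y in Ioi 0, -deriv F y := by simp [integral_neg, hFTC, F]
    _ ≤ ∫ y in Ioi 0, R y := by
      refine setIntegral_mono_on hFint.neg hRint measurableSet_Ioi fun y _ => ?_
      rw [hF', ← neg_mul]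
      simp only [R]
      gcongr
      nlinarith [sq_nonneg (v y + deriv v y)]

def h1Density (u : ℝ × ℝ → ℝ) (p : ℝ × ℝ) : ℝ := (pdX u p ^ 2 + pdY u p ^ 2) + u p ^ 2

lemma continuous_h1Density {u : ℝ × ℝ → ℝ} (hu : ContDiff ℝ 1 u) :
    Continuous (h1Density u) := by
  have hdu := hu.continuous_fderiv one_ne_zero
  have hX : Continuous (pdX u) := hdu.clm_apply continuous_const
  have hY : Continuous (pdY u) := hdu.clm_apply continuous_const
  unfold h1Density
  fun_prop

lemma hasCompactSupport_h1Density {u : ℝ × ℝ → ℝ} (hu : HasCompactSupport u) :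
    HasCompactSupport (h1Density u) := by
  refine hu.mono' fun p hp => by_contra fun hp' => hp ?_
  have hdu : fderiv ℝ u p = 0 :=
    Function.notMem_support.mp fun h => hp' (support_fderiv_subset ℝ h)
  simp [h1Density, pdX, pdY, hdu, image_eq_zero_of_notMem_tsupport hp']

lemma h1Density_nonneg (u : ℝ × ℝ → ℝ) (p : ℝ × ℝ) : 0 ≤ h1Density u p := by
  unfold h1Density; positivity

lemma hasDerivAt_pdY {u : ℝ × ℝ → ℝ} (hu : Differentiable ℝ u) (x y : ℝ) :
    HasDerivAt (fun y => u (x, y)) (pdY u (x, y)) y := by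
  have := (hu (x, y)).hasFDerivAt.comp_hasDerivAt y
    ((hasDerivAt_const y x).prodMk (hasDerivAt_id y))
  simpa [Function.comp_def, pdY] using this

lemma sq_apply_zero_le_integral_h1Density {u : ℝ × ℝ → ℝ} (hu : ContDiff ℝ 1 u)
    (hcs : HasCompactSupport u) {β μ : ℝ} (hβ0 : 0 < β) (hβ1 : β ≤ 1) (hμ : 0 < μ) (x : ℝ) :
    u (x, 0) ^ 2 ≤
      (μ + 2) * ∫ y in Ioi 0, h1Density u (x, y) * (y ^ (β - 1) * exp (-μ * y)) := by
  have hv : ContDiff ℝ 1 fun y => u (x, y) := hu.comp (contDiff_const.prodMk contDiff_id)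
  have hdv : deriv (fun y => u (x, y)) = fun y => pdY u (x, y) :=
    funext fun y => (hasDerivAt_pdY (hu.differentiable one_ne_zero) x y).deriv
  have hint :
      IntegrableOn (fun y => h1Density u (x, y) * (y ^ (β - 1) * exp (-μ * y))) (Ioi 0) :=
    ((hasCompactSupport_h1Density hcs).comp_prodMkRight x).integrable_mul
      ((continuous_h1Density hu).comp (by fun_prop))
      (integrableOn_rpow_sub_one_mul_exp_neg hβ0 hμ)
  rw [← integral_const_mul]
  calc u (x, 0) ^ 2
      ≤ ∫ y in Ioi 0,
          ((μ + 1 + 1) * u (x, y) ^ 2 + pdY u (x, y) ^ 2) * exp (-((μ + 1) * y)) := by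
        simpa only [hdv] using
          sq_apply_zero_le_integral_Ioi hv (hcs.comp_prodMkRight x) (μ + 1)
    _ ≤ _ := by
      refine integral_mono_of_nonneg (ae_of_all _ fun y => by positivity) (hint.const_mul _) ?_
      filter_upwards [ae_restrict_mem measurableSet_Ioi] with y (hy : 0 < y)
      have hexp : exp (-((μ + 1) * y)) = exp (-y) * exp (-μ * y) := by
        rw [← exp_add]; ring_nf
      have hG := h1Density_nonneg u (x, y)
      calc ((μ + 1 + 1) * u (x, y) ^ 2 + pdY u (x, y) ^ 2) * exp (-((μ + 1) * y))
          = ((μ + 2) * u (x, y) ^ 2 + pdY u (x, y) ^ 2) * exp (-μ * y) * exp (-y) := by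
            rw [hexp]; ring
        _ ≤ (μ + 2) * h1Density u (x, y) * exp (-μ * y) * y ^ (β - 1) := by
            gcongr
            · unfold h1Density
              nlinarith [sq_nonneg (pdX u (x, y)), sq_nonneg (pdY u (x, y))]
            · exact exp_neg_le_rpow_sub_one hβ0.le hβ1 hy
        _ = _ := by ring

/-- Γ₀-boundary trace estimate on the quadrant O = (x₀,∞) × (0,∞)
when 0 < β < 1; the constant C depends only on μ. -/
theorem stmt12 :
    ∀ μ : ℝ, 0 < μ → ∃ C : ℝ, 0 < C ∧
      ∀ β : ℝ, 0 < β → β < 1 → ∀ γ : ℝ, 0 < γ → ∀ x₀ : ℝ,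
        ∀ u : ℝ × ℝ → ℝ, ContDiff ℝ 1 u → HasCompactSupport u →
          (∫ x in Set.Ioi x₀, (u (x, 0)) ^ 2 * Real.exp (-γ * |x|))
            ≤ C * ∫ p in Set.Ioi x₀ ×ˢ Set.Ioi (0 : ℝ),
                (((pdX u p) ^ 2 + (pdY u p) ^ 2) + (u p) ^ 2) * hw β γ μ p := by
  intro μ hμ
  refine ⟨μ + 2, by linarith, fun β hβ0 hβ1 γ hγ x₀ u hu hcs => ?_⟩
  have hint : IntegrableOn (fun p => h1Density u p * hw β γ μ p) (Ioi x₀ ×ˢ Ioi 0) :=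
    IntegrableOn.mono_set ((hasCompactSupport_h1Density hcs).integrable_mul
      (continuous_h1Density hu) (integrableOn_hw_UHP hβ0 hγ hμ)) fun p hp => hp.2
  have htrace : IntegrableOn (fun x => u (x, 0) ^ 2 * exp (-γ * |x|)) (Ioi x₀) :=
    (((hcs.comp_prodMkLeft 0).comp_left (g := (· ^ 2)) (zero_pow two_ne_zero)).integrable_mul
      (by fun_prop) (integrable_exp_neg_mul_abs hγ)).integrableOn
  rw [Measure.volume_eq_prod] at hint ⊢
  change _ ≤ _ * ∫ p in _, h1Density u p * hw β γ μ p ∂_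
  rw [setIntegral_prod _ hint, ← integral_const_mul]
  refine setIntegral_mono_on htrace ?_ measurableSet_Ioi fun x _ => ?_
  · rw [IntegrableOn, ← Measure.prod_restrict] at hint
    exact hint.integral_prod_left.const_mul _
  calc u (x, 0) ^ 2 * exp (-γ * |x|)
      ≤ (μ + 2) * (∫ y in Ioi 0, h1Density u (x, y) * (y ^ (β - 1) * exp (-μ * y)))
          * exp (-γ * |x|) := by
        gcongr
        exact sq_apply_zero_le_integral_h1Density hu hcs hβ0 hβ1.le hμ x
    _ = (μ + 2) * ∫ y in Ioi 0, h1Density u (x, y) * hw β γ μ (x, y) := by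
        simp only [mul_assoc, ← integral_mul_const, hw_mk]
        congr 2 with y
        ring
end
end
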